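/- arXiv:2305.15548 — 6 statements merged into one kernel-verified Lean document; each statement's English description precedes it below -/
import Mathlib

section
/- The set of complex numbers z satisfying conj(z)^4 = z^2 + 4z (i.e., the parameter choice a = 4, b = 0) is finite and has exactly 6 elements. -/
/-!
Write `z = x + y i`. The imaginary part of `conj z ^ 4 = z ^ 2 + 4 z` factors as
`y (2 x y² - 2 x³ - x - 2) = 0`. On the real axis the solutions are `0` and the unique real root
of `x³ = x + 4`. Off the axis, eliminating `y²` from the real part leaves a sextic in `x`; it is
negative on `(-11/10, 3/5)` and strictly monotone on either side (its derivative has a fixed sign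
there), so it has exactly two real roots `α < 0 < β`, and each contributes the conjugate pair
`x = α` (resp. `β`), `y = ±√((2x³ + x + 2) / (2x))`.
-/

open Set ComplexConjugate Interval

theorem Set.InjOn.exists_apply_eq_iff_of_uIcc_subset {α δ : Type*}
    [ConditionallyCompleteLinearOrder α] [TopologicalSpace α] [OrderTopology α]
    [DenselyOrdered α] [LinearOrder δ] [TopologicalSpace δ] [OrderClosedTopology δ]
    {f : α → δ} {s : Set α} {a b : α} (hinj : InjOn f s)
    (hab : [[a, b]] ⊆ s) (hf : ContinuousOn f [[a, b]]) {y : δ} (hy : y ∈ [[f a, f b]]) :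
    ∃ c ∈ s, ∀ x ∈ s, f x = y ↔ x = c := by
  obtain ⟨c, hc, rfl⟩ := intermediate_value_uIcc hf hy
  exact ⟨c, hab hc, fun x hx => hinj.eq_iff hx (hab hc)⟩

theorem exists_cubic_root : ∃ r : ℝ, 1 ≤ r ∧ ∀ x : ℝ, x ^ 3 = x + 4 ↔ x = r := by
  have hmono : StrictMonoOn (fun x : ℝ => x ^ 3 - x) (Ici 1) := by
    intro x hx y hy hxy
    simp only [mem_Ici] at hx hy
    nlinarith [mul_pos (sub_pos.2 hxy) (by nlinarith : (0:ℝ) < x ^ 2 + x * y + y ^ 2 - 1)]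
  obtain ⟨r, hr, hroot⟩ := hmono.injOn.exists_apply_eq_iff_of_uIcc_subset (a := 1) (b := 2)
    (by rw [uIcc_of_le one_le_two]; exact Icc_subset_Ici_self) (by fun_prop) (y := 4)
    (by rw [uIcc_of_le (by norm_num)]; norm_num)
  refine ⟨r, hr, fun x => ⟨fun hx => ?_, fun hx => ?_⟩⟩
  · rcases lt_or_ge x 1 with hx1 | hx1
    · nlinarith [mul_nonneg (sq_nonneg (x + 1)) (by linarith : (0:ℝ) ≤ 1 - x)]
    · exact (hroot x hx1).1 (by linarith)
  · have := (hroot x (hx ▸ hr)).2 hx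
    linarith

def sextic (x : ℝ) : ℝ := 16 * x ^ 6 + 8 * x ^ 4 + 32 * x ^ 3 - 3 * x ^ 2 - 8 * x - 4

theorem hasDerivAt_sextic (x : ℝ) :
    HasDerivAt sextic (96 * x ^ 5 + 32 * x ^ 3 + 96 * x ^ 2 - 6 * x - 8) x :=
  ((((((((hasDerivAt_id' x).pow 6).const_mul 16).add (((hasDerivAt_id' x).pow 4).const_mul 8)).add
    (((hasDerivAt_id' x).pow 3).const_mul 32)).sub (((hasDerivAt_id' x).pow 2).const_mul 3)).sub
    ((hasDerivAt_id' x).const_mul 8)).sub_const 4).congr_deriv (by push_cast; ring)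

theorem continuous_sextic : Continuous sextic := by
  unfold sextic; fun_prop

theorem sextic_strictAntiOn : StrictAntiOn sextic (Iic (-11 / 10)) := by
  refine strictAntiOn_of_deriv_neg (convex_Iic _) continuous_sextic.continuousOn fun x hx => ?_
  rw [interior_Iic, mem_Iio] at hx
  have ht : 0 ≤ -11 / 10 - x := by linarith
  rw [(hasDerivAt_sextic x).deriv]
  nlinarith [pow_nonneg ht 2, pow_nonneg ht 3, pow_nonneg ht 4, pow_nonneg ht 5]

theorem sextic_strictMonoOn : StrictMonoOn sextic (Ici (3 / 5)) := by
  refine strictMonoOn_of_deriv_pos (convex_Ici _) continuous_sextic.continuousOn fun x hx => ?_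
  rw [interior_Ici, mem_Ioi] at hx
  have ht : 0 ≤ x - 3 / 5 := by linarith
  rw [(hasDerivAt_sextic x).deriv]
  nlinarith [pow_nonneg ht 2, pow_nonneg ht 3, pow_nonneg ht 4, pow_nonneg ht 5]

theorem sextic_neg {x : ℝ} (hx : x ∈ Ioo (-11 / 10) (3 / 5)) : sextic x < 0 := by
  have hu : 0 < x + 11 / 10 := by linarith [hx.1]
  have hv : 0 < 3 / 5 - x := by linarith [hx.2]
  unfold sextic
  nlinarith [mul_pos hu hv, mul_pos (mul_pos hu hv) (mul_pos hu hv), sq_nonneg x,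
    sq_nonneg (x ^ 2), sq_nonneg (x ^ 3), sq_nonneg (x + 1 / 2), sq_nonneg (x ^ 2 - 1 / 4)]

theorem exists_sextic_roots :
    ∃ α β : ℝ, α ≤ -11 / 10 ∧ 3 / 5 ≤ β ∧ ∀ x, sextic x = 0 ↔ x = α ∨ x = β := by
  obtain ⟨α, hα, hαroot⟩ := sextic_strictAntiOn.injOn.exists_apply_eq_iff_of_uIcc_subset
    (a := -6 / 5) (b := -11 / 10) (by rw [uIcc_of_le (by norm_num)]; exact Icc_subset_Iic_self)
    continuous_sextic.continuousOn (y := 0)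
    (by rw [uIcc_of_ge (by norm_num [sextic])]; norm_num [sextic])
  obtain ⟨β, hβ, hβroot⟩ := sextic_strictMonoOn.injOn.exists_apply_eq_iff_of_uIcc_subset
    (a := 3 / 5) (b := 33 / 50) (by rw [uIcc_of_le (by norm_num)]; exact Icc_subset_Ici_self)
    continuous_sextic.continuousOn (y := 0)
    (by rw [uIcc_of_le (by norm_num [sextic])]; norm_num [sextic])
  refine ⟨α, β, hα, hβ, fun x => ⟨fun hx => ?_, ?_⟩⟩
  · rcases le_or_gt x (-11 / 10) with h | h
    · exact Or.inl ((hαroot x h).1 hx)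
    rcases lt_or_ge x (3 / 5) with h' | h'
    · exact absurd hx (sextic_neg ⟨h, h'⟩).ne
    · exact Or.inr ((hβroot x h').1 hx)
  · rintro (rfl | rfl)
    exacts [(hαroot _ hα).2 rfl, (hβroot _ hβ).2 rfl]

theorem conj_pow_four_eq_sq_add_iff (z : ℂ) :
    conj z ^ 4 = z ^ 2 + 4 * z ↔
      (z.im = 0 ∧ (z.re = 0 ∨ z.re ^ 3 = z.re + 4)) ∨
        (sextic z.re = 0 ∧ 2 * z.re * z.im ^ 2 = 2 * z.re ^ 3 + z.re + 2) := by
  obtain ⟨x, y⟩ := z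
  have hparts : conj (⟨x, y⟩ : ℂ) ^ 4 = ⟨x, y⟩ ^ 2 + 4 * ⟨x, y⟩ ↔
      (x ^ 2 - y ^ 2) ^ 2 - 4 * x ^ 2 * y ^ 2 = x ^ 2 - y ^ 2 + 4 * x ∧
        -(4 * x * y * (x ^ 2 - y ^ 2)) = 2 * x * y + 4 * y := by
    simp only [Complex.ext_iff, pow_succ, pow_zero, one_mul, Complex.mul_re, Complex.mul_im,
      Complex.add_re, Complex.add_im, Complex.conj_re, Complex.conj_im, Complex.re_ofNat,
      Complex.im_ofNat]
    constructor <;> rintro ⟨hre, him⟩ <;>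
      exact ⟨by linear_combination hre, by linear_combination him⟩
  rw [hparts]
  dsimp only [sextic]
  constructor
  · rintro ⟨hre, him⟩
    have : y * (2 * x * y ^ 2 - 2 * x ^ 3 - x - 2) = 0 := by linear_combination him / 2
    rcases mul_eq_zero.mp this with rfl | hy
    · have : x * (x ^ 3 - x - 4) = 0 := by linear_combination hre
      exact Or.inl ⟨rfl, (mul_eq_zero.mp this).imp id fun h => by linear_combination h⟩
    · refine Or.inr ⟨?_, by linear_combination hy⟩
      linear_combination (-4 * x ^ 2) * hre + (2 * x * y ^ 2 - 10 * x ^ 3 + 3 * x + 2) * hy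
  · rintro (⟨rfl, rfl | hx⟩ | ⟨hp, hy⟩)
    · norm_num
    · exact ⟨by linear_combination x * hx, by ring⟩
    · have hx : x ≠ 0 := by rintro rfl; norm_num at hy
      refine ⟨?_, by linear_combination (2 * y) * hy⟩
      have : 4 * x ^ 2 *
          ((x ^ 2 - y ^ 2) ^ 2 - 4 * x ^ 2 * y ^ 2 - (x ^ 2 - y ^ 2 + 4 * x)) = 0 := by
        linear_combination (-1) * hp + (2 * x * y ^ 2 - 10 * x ^ 3 + 3 * x + 2) * hy
      linear_combination (mul_eq_zero.mp this).resolve_left (by positivity)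

theorem mul_sq_eq_iff_eq_sqrt_or_eq_neg_sqrt {a c y : ℝ} (ha : a ≠ 0) (hca : 0 ≤ c / a) :
    a * y ^ 2 = c ↔ y = √(c / a) ∨ y = -√(c / a) := by
  rw [← sq_eq_sq_iff_eq_or_eq_neg, Real.sq_sqrt hca, eq_div_iff ha, mul_comm]

theorem setOf_conj_pow_four_eq {r α β a b : ℝ} (hr : ∀ x, x ^ 3 = x + 4 ↔ x = r)
    (hsextic : ∀ x, sextic x = 0 ↔ x = α ∨ x = β)
    (ha : ∀ y, 2 * α * y ^ 2 = 2 * α ^ 3 + α + 2 ↔ y = a ∨ y = -a)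
    (hb : ∀ y, 2 * β * y ^ 2 = 2 * β ^ 3 + β + 2 ↔ y = b ∨ y = -b) :
    {z : ℂ | conj z ^ 4 = z ^ 2 + 4 * z} = {0, (r : ℂ), ⟨α, a⟩, ⟨α, -a⟩, ⟨β, b⟩, ⟨β, -b⟩} := by
  ext z
  change conj z ^ 4 = _ ↔ _
  rw [conj_pow_four_eq_sq_add_iff, hr, hsextic]
  obtain ⟨x, y⟩ := z
  simp only [mem_insert_iff, mem_singleton_iff, Complex.ext_iff, Complex.zero_re, Complex.zero_im,
    Complex.ofReal_re, Complex.ofReal_im]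
  constructor
  · rintro (⟨rfl, rfl | rfl⟩ | ⟨rfl | rfl, h⟩)
    · tauto
    · tauto
    · rcases (ha y).1 h with rfl | rfl <;> tauto
    · rcases (hb y).1 h with rfl | rfl <;> tauto
  · rintro (⟨rfl, rfl⟩ | ⟨rfl, rfl⟩ | ⟨rfl, rfl⟩ | ⟨rfl, rfl⟩ | ⟨rfl, rfl⟩ | ⟨rfl, rfl⟩)
    · tauto
    · tauto
    · exact Or.inr ⟨Or.inl rfl, (ha _).2 (Or.inl rfl)⟩
    · exact Or.inr ⟨Or.inl rfl, (ha _).2 (Or.inr rfl)⟩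
    · exact Or.inr ⟨Or.inr rfl, (hb _).2 (Or.inl rfl)⟩
    · exact Or.inr ⟨Or.inr rfl, (hb _).2 (Or.inr rfl)⟩

theorem ncard_two_real_two_conj_pairs {r α β a b : ℝ} (hr : r ≠ 0) (hαβ : α ≠ β) (ha : a ≠ 0)
    (hb : b ≠ 0) :
    ({0, (r : ℂ), ⟨α, a⟩, ⟨α, -a⟩, ⟨β, b⟩, ⟨β, -b⟩} : Set ℂ).ncard = 6 := by
  have hna : a ≠ -a := by intro h; apply ha; linarith
  have hnb : b ≠ -b := by intro h; apply hb; linarith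
  rw [ncard_eq_toFinset_card']
  simp [Complex.ext_iff, Finset.card_insert_of_notMem, *, Ne.symm, neg_eq_zero]

/-- the equation `conj z ^ 4 = z ^ 2 + 4 z` has exactly 6 complex solutions. -/
theorem stmt_5 :
    {z : ℂ | (starRingEnd ℂ z) ^ 4 = z ^ 2 + 4 * z}.Finite ∧
      {z : ℂ | (starRingEnd ℂ z) ^ 4 = z ^ 2 + 4 * z}.ncard = 6 := by
  obtain ⟨r, hr1, hr⟩ := exists_cubic_root
  obtain ⟨α, β, hα, hβ, hsextic⟩ := exists_sextic_roots
  have hqα : 0 < (2 * α ^ 3 + α + 2) / (2 * α) :=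
    div_pos_of_neg_of_neg (by nlinarith [mul_nonneg (by linarith : 0 ≤ -α - 11 / 10) (sq_nonneg α)])
      (by linarith)
  have hqβ : 0 < (2 * β ^ 3 + β + 2) / (2 * β) :=
    div_pos (by nlinarith [pow_pos (by linarith : 0 < β) 3]) (by linarith)
  rw [setOf_conj_pow_four_eq hr hsextic
    (fun _ => mul_sq_eq_iff_eq_sqrt_or_eq_neg_sqrt (by linarith) hqα.le)
    (fun _ => mul_sq_eq_iff_eq_sqrt_or_eq_neg_sqrt (by linarith) hqβ.le)]
  exact ⟨toFinite _, ncard_two_real_two_conj_pairs (by linarith) (by linarith)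
    (Real.sqrt_pos.2 hqα).ne' (Real.sqrt_pos.2 hqβ).ne'⟩
end

section
/- The set of complex numbers z satisfying conj(z)^4 = z^2 - 4 (i.e., the parameter choice a = 0, b = -4) is finite and has exactly 4 elements. -/
set_option maxHeartbeats 1000000

/-- the equation `conj z ^ 4 = z ^ 2 - 4` has exactly 4 complex solutions. -/
theorem stmt_6 :
    {z : ℂ | (starRingEnd ℂ z) ^ 4 = z ^ 2 - 4}.Finite ∧
      {z : ℂ | (starRingEnd ℂ z) ^ 4 = z ^ 2 - 4}.ncard = 4 := by
  have h5 : Real.sqrt 5 ^ 2 = 5 := Real.sq_sqrt (by norm_num)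
  have h5nn : (0:ℝ) ≤ Real.sqrt 5 := Real.sqrt_nonneg 5
  have h19 : Real.sqrt 19 ^ 2 = 19 := Real.sq_sqrt (by norm_num)
  have h19nn : (0:ℝ) ≤ Real.sqrt 19 := Real.sqrt_nonneg 19
  have hm : (0:ℝ) < 2 * Real.sqrt 5 - 1 := by nlinarith
  have hp : (0:ℝ) < 2 * Real.sqrt 5 + 1 := by nlinarith
  set x : ℝ := Real.sqrt (2 * Real.sqrt 5 - 1) / 2 with hxdef
  set y : ℝ := Real.sqrt (2 * Real.sqrt 5 + 1) / 2 with hydef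
  have hxpos : 0 < x := div_pos (Real.sqrt_pos.2 hm) two_pos
  have hypos : 0 < y := div_pos (Real.sqrt_pos.2 hp) two_pos
  have hx2 : x ^ 2 = (2 * Real.sqrt 5 - 1) / 4 := by
    rw [hxdef, div_pow, Real.sq_sqrt hm.le]; norm_num
  have hy2 : y ^ 2 = (2 * Real.sqrt 5 + 1) / 4 := by
    rw [hydef, div_pow, Real.sq_sqrt hp.le]; norm_num
  have hxy : x * y = Real.sqrt 19 / 4 := by
    rw [hxdef, hydef, div_mul_div_comm, ← Real.sqrt_mul hm.le]
    have : (2 * Real.sqrt 5 - 1) * (2 * Real.sqrt 5 + 1) = 19 := by nlinarith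
    rw [this]; norm_num
  set s : ℂ := ⟨x, y⟩ with hsdef
  set c : ℂ := (starRingEnd ℂ) s with hcdef
  have hs2 : s ^ 2 = ⟨-1/2, Real.sqrt 19 / 2⟩ := by
    apply Complex.ext <;>
      simp [hsdef, pow_two, Complex.mul_re, Complex.mul_im] <;> nlinarith
  have hu : (s ^ 2) ^ 2 + s ^ 2 + 5 = 0 := by
    rw [hs2]
    apply Complex.ext <;>
      simp [pow_two, Complex.mul_re, Complex.mul_im, Complex.add_re, Complex.add_im] <;>
      nlinarith
  have hcs : c ^ 2 = -1 - s ^ 2 := by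
    rw [hcdef, ← map_pow, hs2]
    apply Complex.ext <;> simp <;> norm_num
  have F1 : (starRingEnd ℂ) s ^ 4 = s ^ 2 - 4 := by
    rw [← hcdef]
    linear_combination (c ^ 2 - s ^ 2 - 1) * hcs + hu
  have F2 : s ^ 4 = c ^ 2 - 4 := by
    linear_combination hu - hcs
  have hset : {z : ℂ | (starRingEnd ℂ z) ^ 4 = z ^ 2 - 4} = {s, -s, c, -c} := by
    ext z
    simp only [Set.mem_setOf_eq, Set.mem_insert_iff, Set.mem_singleton_iff]
    constructor
    · intro h
      have h2 : z ^ 4 = (starRingEnd ℂ z) ^ 2 - 4 := by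
        have := congrArg (starRingEnd ℂ) h
        simpa [map_pow, map_sub, map_ofNat] using this
      have hfac : ((starRingEnd ℂ z) ^ 2 - z ^ 2) * ((starRingEnd ℂ z) ^ 2 + z ^ 2 + 1) = 0 := by
        linear_combination h - h2
      rcases mul_eq_zero.1 hfac with hA | hB
      · exfalso
        have hA' : (starRingEnd ℂ) (z ^ 2) = z ^ 2 := by
          rw [map_pow]; linear_combination hA
        have him : (z ^ 2).im = 0 := Complex.conj_eq_iff_im.mp hA'
        have hw : (z ^ 2) * (z ^ 2) = z ^ 2 - 4 := by linear_combination h2 + hA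
        have hre := congrArg Complex.re hw
        rw [Complex.mul_re, Complex.sub_re, him] at hre
        simp only [mul_zero, sub_zero] at hre
        have h4 : ((4:ℂ)).re = 4 := by norm_num
        rw [h4] at hre
        nlinarith [sq_nonneg ((z ^ 2).re - 1/2)]
      · have hz4 : z ^ 4 + z ^ 2 + 5 = 0 := by
          linear_combination h + (z ^ 2 + 1 - (starRingEnd ℂ z) ^ 2) * hB
        have hfac2 : (z ^ 2 - s ^ 2) * (z ^ 2 - c ^ 2) = 0 := by
          linear_combination hz4 - hu + (s ^ 2 - z ^ 2) * hcs
        rcases mul_eq_zero.1 hfac2 with hC | hC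
        · have : (z - s) * (z + s) = 0 := by linear_combination hC
          rcases mul_eq_zero.1 this with h' | h'
          · exact Or.inl (by linear_combination h')
          · exact Or.inr (Or.inl (by linear_combination h'))
        · have : (z - c) * (z + c) = 0 := by linear_combination hC
          rcases mul_eq_zero.1 this with h' | h'
          · exact Or.inr (Or.inr (Or.inl (by linear_combination h')))
          · exact Or.inr (Or.inr (Or.inr (by linear_combination h')))
    · rintro (rfl | rfl | rfl | rfl)
      · exact F1
      · simp only [map_neg]
        rw [← hcdef]
        linear_combination F1
      · rw [hcdef, Complex.conj_conj, ← hcdef]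
        exact F2
      · rw [map_neg, hcdef, Complex.conj_conj, ← hcdef]
        linear_combination F2
  have hcre : c.re = x := by simp [hcdef, hsdef]
  have hcim : c.im = -y := by simp [hcdef, hsdef]
  have hsre : s.re = x := rfl
  have hsim : s.im = y := rfl
  have ne1 : s ≠ -s := by
    intro h; have := congrArg Complex.re h; simp [hsre] at this; linarith
  have ne2 : s ≠ c := by
    intro h; have := congrArg Complex.im h; rw [hsim, hcim] at this; linarith
  have ne3 : s ≠ -c := by
    intro h; have := congrArg Complex.re h; rw [hsre, Complex.neg_re, hcre] at this; linarith
  have ne4 : -s ≠ c := by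
    intro h; have := congrArg Complex.re h; rw [Complex.neg_re, hsre, hcre] at this; linarith
  have ne5 : -s ≠ -c := by
    intro h; have := congrArg Complex.im h; rw [Complex.neg_im, Complex.neg_im, hsim, hcim] at this; linarith
  have ne6 : c ≠ -c := by
    intro h; have := congrArg Complex.re h; rw [Complex.neg_re, hcre] at this; linarith
  rw [hset]
  constructor
  · exact Set.toFinite _
  · rw [Set.ncard_insert_of_notMem (by simp [ne1, ne2, ne3]),
        Set.ncard_insert_of_notMem (by simp [ne4, ne5]),
        Set.ncard_insert_of_notMem (by simp [ne6]),
        Set.ncard_singleton]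
end

section
/- The set of complex numbers z satisfying conj(z)^4 = z^2 + 4 (i.e., the parameter choice a = 0, b = 4) is finite and has exactly 4 elements. -/
open Complex in
/-- the equation `conj z ^ 4 = z ^ 2 + 4` has exactly 4 complex solutions. -/
theorem stmt_8 :
    {z : ℂ | (starRingEnd ℂ z) ^ 4 = z ^ 2 + 4}.Finite ∧
      {z : ℂ | (starRingEnd ℂ z) ^ 4 = z ^ 2 + 4}.ncard = 4 := by
  have h17 : Real.sqrt 17 ^ 2 = 17 := Real.sq_sqrt (by norm_num)
  have h17pos : 1 < Real.sqrt 17 := by nlinarith [Real.sqrt_nonneg 17]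
  set r1 : ℝ := Real.sqrt ((1 + Real.sqrt 17)/2) with hr1def
  set r2 : ℝ := Real.sqrt ((Real.sqrt 17 - 1)/2) with hr2def
  have hr1 : r1 ^ 2 = (1 + Real.sqrt 17)/2 := Real.sq_sqrt (by linarith)
  have hr2 : r2 ^ 2 = (Real.sqrt 17 - 1)/2 := Real.sq_sqrt (by linarith)
  have hr1pos : 0 < r1 := Real.sqrt_pos.mpr (by linarith)
  have hr2pos : 0 < r2 := Real.sqrt_pos.mpr (by linarith)
  have hC : (Complex.I * r2)^2 = -((r2:ℂ)^2) := by
    rw [mul_pow, Complex.I_sq]; ring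
  have hset : {z : ℂ | (starRingEnd ℂ z) ^ 4 = z ^ 2 + 4}
      = {(r1:ℂ), -(r1:ℂ), Complex.I * r2, -(Complex.I * r2)} := by
    ext z
    simp only [Set.mem_setOf_eq, Set.mem_insert_iff, Set.mem_singleton_iff]
    constructor
    · intro h
      have h' : (starRingEnd ℂ (z^2))^2 = z^2 + 4 := by
        rw [map_pow, ← pow_mul, ← h]
      have hre' := congrArg Complex.re h'
      have him' := congrArg Complex.im h'
      simp [pow_two, Complex.mul_re, Complex.mul_im, Complex.add_re, Complex.add_im] at hre' him'
      set x : ℝ := z.re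
      set y : ℝ := z.im
      have hre : (x^2 - y^2)^2 - (2*x*y)^2 = (x^2 - y^2) + 4 := by
        linear_combination hre'
      have him : (2*x*y) * (2*(x^2 - y^2) + 1) = 0 := by
        linear_combination -him'
      have hq0 : 2*x*y = 0 := by
        rcases mul_eq_zero.mp him with h0 | h0
        · exact h0
        · nlinarith [sq_nonneg (2*x*y)]
      set p : ℝ := x^2 - y^2 with hpdef
      have hz2 : z^2 = (p : ℂ) := by
        apply Complex.ext
        · simp [pow_two, Complex.mul_re]; ring
        · simp [pow_two, Complex.mul_im]; linarith
      have hpeq : p^2 = p + 4 := by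
        rw [hq0] at hre; linarith [hre]
      have hfac : (2*p - 1 - Real.sqrt 17) * (2*p - 1 + Real.sqrt 17) = 0 := by nlinarith
      rcases mul_eq_zero.mp hfac with hcase | hcase
      · have hpr : p = r1^2 := by rw [hr1]; linarith
        have hzz : z^2 = ((r1:ℂ))^2 := by rw [hz2, hpr]; push_cast; ring
        have hfac2 : (z - r1) * (z + r1) = 0 := by linear_combination hzz
        rcases mul_eq_zero.mp hfac2 with h0 | h0
        · left; linear_combination h0
        · right; left; linear_combination h0
      · have hpr : p = -(r2^2) := by rw [hr2]; linarith
        have hzz : z^2 = (Complex.I * r2)^2 := by rw [hz2, hpr, hC]; push_cast; ring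
        have hfac2 : (z - Complex.I * r2) * (z + Complex.I * r2) = 0 := by
          linear_combination hzz
        rcases mul_eq_zero.mp hfac2 with h0 | h0
        · right; right; left; linear_combination h0
        · right; right; right; linear_combination h0
    · have e1 : ((r1:ℂ))^4 = ((r1:ℂ))^2 + 4 := by
        have h4 : r1^4 = r1^2 + 4 := by nlinarith [hr1, h17]
        calc ((r1:ℂ))^4 = ((r1^4 : ℝ) : ℂ) := by push_cast; ring
          _ = ((r1^2 + 4 : ℝ) : ℂ) := by rw [h4]
          _ = ((r1:ℂ))^2 + 4 := by push_cast; ring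
      have e2 : (Complex.I * r2)^4 = (Complex.I * r2)^2 + 4 := by
        have h4 : r2^4 = -(r2^2) + 4 := by nlinarith [hr2, h17]
        calc (Complex.I * (r2:ℂ))^4 = (-((r2:ℂ)^2))^2 := by
              rw [show (4:ℕ) = 2*2 from rfl, pow_mul, hC]
          _ = ((r2^4 : ℝ) : ℂ) := by push_cast; ring
          _ = ((-(r2^2) + 4 : ℝ) : ℂ) := by rw [h4]
          _ = (Complex.I * (r2:ℂ))^2 + 4 := by rw [hC]; push_cast; ring
      rintro (rfl | rfl | rfl | rfl)
      · simpa using e1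
      · simp only [map_neg, Complex.conj_ofReal]
        rw [show (-(r1:ℂ))^4 = ((r1:ℂ))^4 by ring, show (-(r1:ℂ))^2 = ((r1:ℂ))^2 by ring]
        exact e1
      · rw [show (starRingEnd ℂ) (Complex.I * r2) = -(Complex.I * r2) by
          simp [Complex.conj_I, Complex.conj_ofReal]]
        rw [show (-(Complex.I * (r2:ℂ)))^4 = (Complex.I * r2)^4 by ring]
        exact e2
      · rw [show (starRingEnd ℂ) (-(Complex.I * r2)) = Complex.I * r2 by
          simp [Complex.conj_I, Complex.conj_ofReal]]
        rw [show (-(Complex.I * (r2:ℂ)))^2 = (Complex.I * r2)^2 by ring]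
        exact e2
  have hAB : (r1:ℂ) ≠ -(r1:ℂ) := by
    simp [Complex.ext_iff]; intro h; linarith
  have hAC : (r1:ℂ) ≠ Complex.I * r2 := by
    simp [Complex.ext_iff]; intro h; linarith
  have hAD : (r1:ℂ) ≠ -(Complex.I * r2) := by
    simp [Complex.ext_iff]; intro h; linarith
  have hBC : -(r1:ℂ) ≠ Complex.I * r2 := by
    simp [Complex.ext_iff]; intro h; linarith
  have hBD : -(r1:ℂ) ≠ -(Complex.I * r2) := by
    simp [Complex.ext_iff]; intro h; linarith
  have hCD : Complex.I * (r2:ℂ) ≠ -(Complex.I * r2) := by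
    simp [Complex.ext_iff]; intro h; linarith
  rw [hset]
  refine ⟨(Set.finite_singleton _).insert _ |>.insert _ |>.insert _, ?_⟩
  rw [Set.ncard_insert_of_notMem (by simp [hAB, hAC, hAD]),
      Set.ncard_insert_of_notMem (by simp [hBC, hBD]),
      Set.ncard_pair hCD]
end

section
/- The set of complex numbers z satisfying conj(z)^4 = z^2 - (1/2)z + 1/15 (i.e., the parameter choice a = -1/2, b = 1/15) is finite and has exactly 10 elements. -/
open Polynomial

noncomputable def pQ : ℝ[X] := C 30 * X^4 - C 30 * X^2 + C 15 * X - C 2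
noncomputable def pP : ℝ[X] := C (-3840) * X^6 + C (-1920) * X^4 + C 960 * X^3 + C 656 * X^2 + C (-240) * X + C 15
noncomputable def pP1 : ℝ[X] := C (-23040) * X^5 + C (-7680) * X^3 + C 2880 * X^2 + C 1312 * X + C (-240)
noncomputable def pP2 : ℝ[X] := C (-115200) * X^4 + C (-23040) * X^2 + C 5760 * X + C 1312
noncomputable def pP3 : ℝ[X] := C (-460800) * X^3 + C (-46080) * X + C 5760

lemma dP : pP.derivative = pP1 := by
  unfold pP pP1
  simp only [derivative_add, derivative_mul, derivative_C, derivative_X_pow, derivative_X, zero_mul, mul_one, zero_add, mul_zero, add_zero]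
  simp only [← mul_assoc, ← C_mul]
  norm_num

lemma dP1 : pP1.derivative = pP2 := by
  unfold pP1 pP2
  simp only [derivative_add, derivative_mul, derivative_C, derivative_X_pow, derivative_X, zero_mul, mul_one, zero_add, mul_zero, add_zero]
  simp only [← mul_assoc, ← C_mul]
  norm_num

lemma dP2 : pP2.derivative = pP3 := by
  unfold pP2 pP3
  simp only [derivative_add, derivative_mul, derivative_C, derivative_X_pow, derivative_X, zero_mul, mul_one, zero_add, mul_zero, add_zero]
  simp only [← mul_assoc, ← C_mul]
  norm_num

lemma evP (x : ℝ) : pP.eval x = -3840*x^6 - 1920*x^4 + 960*x^3 + 656*x^2 - 240*x + 15 := by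
  simp [pP]; ring

lemma evP3 (x : ℝ) : pP3.eval x = -460800*x^3 - 46080*x + 5760 := by simp [pP3]; ring

lemma pP3_card : pP3.roots.toFinset.card ≤ 1 := by
  apply Finset.card_le_one.mpr
  intro a ha b hb
  simp only [Multiset.mem_toFinset, mem_roots', IsRoot] at ha hb
  have ha' := ha.2; have hb' := hb.2
  rw [evP3] at ha' hb'
  by_contra hne
  rcases lt_or_gt_of_ne hne with h | h
  · nlinarith [sq_nonneg (a+b), mul_nonneg (sub_pos.2 h).le (sq_nonneg (a+b)), mul_nonneg (sub_pos.2 h).le (sq_nonneg a), mul_nonneg (sub_pos.2 h).le (sq_nonneg b)]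
  · nlinarith [sq_nonneg (a+b), mul_nonneg (sub_pos.2 h).le (sq_nonneg (a+b)), mul_nonneg (sub_pos.2 h).le (sq_nonneg a), mul_nonneg (sub_pos.2 h).le (sq_nonneg b)]

lemma pP_card : pP.roots.toFinset.card ≤ 4 := by
  have h1 := pP.card_roots_toFinset_le_derivative
  have h2 := pP1.card_roots_toFinset_le_derivative
  have h3 := pP2.card_roots_toFinset_le_derivative
  rw [dP] at h1; rw [dP1] at h2; rw [dP2] at h3
  have := pP3_card
  omega

lemma pQ_card : pQ.roots.toFinset.card ≤ 4 := by
  have h1 : pQ.roots.toFinset.card ≤ Multiset.card pQ.roots := pQ.roots.toFinset_card_le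
  have h2 := pQ.card_roots'
  have h3 : pQ.natDegree = 4 := by unfold pQ; compute_degree!
  omega

lemma Qroot_mem {x : ℝ} (h : 30*x^4 - 30*x^2 + 15*x - 2 = 0) : x ∈ pQ.roots.toFinset := by
  have hne : pQ ≠ 0 := by
    intro hc
    have := congrArg (eval 0) hc
    simp [pQ] at this
  simp only [Multiset.mem_toFinset, mem_roots', IsRoot]
  refine ⟨hne, ?_⟩
  simp [pQ]; linarith

lemma Proot_mem {x : ℝ} (h : -3840*x^6 - 1920*x^4 + 960*x^3 + 656*x^2 - 240*x + 15 = 0) : x ∈ pP.roots.toFinset := by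
  have hne : pP ≠ 0 := by
    intro hc
    have := congrArg (eval 0) hc
    simp [pP] at this
  simp only [Multiset.mem_toFinset, mem_roots', IsRoot]
  exact ⟨hne, by rw [evP]; exact h⟩

lemma stmt10_four_roots {T : Finset ℝ} (hT : T.card ≤ 4) {r1 r2 r3 r4 x : ℝ}
    (h12 : r1 ≠ r2) (h13 : r1 ≠ r3) (h14 : r1 ≠ r4) (h23 : r2 ≠ r3) (h24 : r2 ≠ r4) (h34 : r3 ≠ r4)
    (m1 : r1 ∈ T) (m2 : r2 ∈ T) (m3 : r3 ∈ T) (m4 : r4 ∈ T) (hx : x ∈ T) :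
    x = r1 ∨ x = r2 ∨ x = r3 ∨ x = r4 := by
  by_contra hc
  push_neg at hc
  obtain ⟨n1, n2, n3, n4⟩ := hc
  have hsub : ({x, r1, r2, r3, r4} : Finset ℝ) ⊆ T := by
    intro y hy
    simp only [Finset.mem_insert, Finset.mem_singleton] at hy
    rcases hy with rfl|rfl|rfl|rfl|rfl <;> assumption
  have hcard : ({x, r1, r2, r3, r4} : Finset ℝ).card = 5 := by
    rw [Finset.card_insert_of_notMem (by simp [n1, n2, n3, n4]),
        Finset.card_insert_of_notMem (by simp [h12, h13, h14]),
        Finset.card_insert_of_notMem (by simp [h23, h24]),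
        Finset.card_insert_of_notMem (by simp [h34]),
        Finset.card_singleton]
  have := Finset.card_le_card hsub
  omega

lemma stmt10_ivt_np {f : ℝ → ℝ} (hf : Continuous f) {a b : ℝ} (hab : a ≤ b)
    (h1 : f a < 0) (h2 : 0 < f b) : ∃ x, a < x ∧ x < b ∧ f x = 0 := by
  obtain ⟨x, hx, hfx⟩ := intermediate_value_Icc hab hf.continuousOn ⟨h1.le, h2.le⟩
  refine ⟨x, lt_of_le_of_ne hx.1 ?_, lt_of_le_of_ne hx.2 ?_, hfx⟩
  · intro h; rw [← h] at hfx; exact absurd hfx h1.ne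
  · intro h; rw [h] at hfx; exact absurd hfx h2.ne'

lemma stmt10_ivt_pn {f : ℝ → ℝ} (hf : Continuous f) {a b : ℝ} (hab : a ≤ b)
    (h1 : 0 < f a) (h2 : f b < 0) : ∃ x, a < x ∧ x < b ∧ f x = 0 := by
  obtain ⟨x, hx1, hx2, hx3⟩ := stmt10_ivt_np (f := fun x => -f x) (by continuity) hab (by simpa) (by simpa)
  exact ⟨x, hx1, hx2, by linarith [hx3]⟩

lemma stmt10_mem_iff (z : ℂ) :
    (starRingEnd ℂ z) ^ 4 = z ^ 2 - (1 / 2) * z + 1 / 15 ↔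
    (z.re^4 - 6*z.re^2*z.im^2 + z.im^4 = z.re^2 - z.im^2 - z.re/2 + 1/15 ∧
     -4*z.re^3*z.im + 4*z.re*z.im^3 = 2*z.re*z.im - z.im/2) := by
  rw [Complex.ext_iff]
  simp [Complex.conj_re, Complex.conj_im, pow_succ, Complex.mul_re, Complex.mul_im,
    Complex.div_re, Complex.div_im, Complex.normSq]
  constructor <;> rintro ⟨h1, h2⟩ <;> constructor <;> linarith

lemma stmt10_cne_re {a b c d : ℝ} (h : a ≠ c) : (⟨a, b⟩ : ℂ) ≠ ⟨c, d⟩ := by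
  intro hc; exact h (congrArg Complex.re hc)

lemma stmt10_cne_im {a b c d : ℝ} (h : b ≠ d) : (⟨a, b⟩ : ℂ) ≠ ⟨c, d⟩ := by
  intro hc; exact h (congrArg Complex.im hc)

-- solutions coming from a root of pP together with y² = g/(8x)
lemma stmt10_sol_nonreal {x y : ℝ} (hP : -3840*x^6 - 1920*x^4 + 960*x^3 + 656*x^2 - 240*x + 15 = 0)
    (h6 : 8*x*y^2 = 8*x^3 + 4*x - 1) (hx : x ≠ 0) :
    (x^4 - 6*x^2*y^2 + y^4 = x^2 - y^2 - x/2 + 1/15 ∧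
     -4*x^3*y + 4*x*y^3 = 2*x*y - y/2) := by
  constructor
  · have h7 : 960*x^2*((x^4 - 6*x^2*y^2 + y^4) - (x^2 - y^2 - x/2 + 1/15)) = 0 := by
      linear_combination hP + (15*(8*x*y^2 + (8*x^3+4*x-1) + 8*x - 48*x^3))*h6
    have hx2 : (960:ℝ)*x^2 ≠ 0 := by positivity
    have := (mul_eq_zero.mp h7).resolve_left hx2
    linarith
  · linear_combination (y/2) * h6

lemma stmt10_gpos1 {x : ℝ} (h : 227/1000 ≤ x) : 0 < 8*x^3 + 4*x - 1 := by
  have h' : (0:ℝ) ≤ x - 227/1000 := by linarith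
  nlinarith [mul_nonneg (mul_nonneg h' h') h', mul_nonneg h' h', mul_nonneg h' (sq_nonneg x)]

lemma stmt10_gpos2 {x : ℝ} (h : 12/25 ≤ x) : 0 < 8*x^3 + 4*x - 1 := by
  have h' : (0:ℝ) ≤ x - 12/25 := by linarith
  nlinarith [mul_nonneg (mul_nonneg h' h') h', mul_nonneg h' h', mul_nonneg h' (sq_nonneg x)]

lemma stmt10_gneg {x : ℝ} (h0 : 0 < x) (h : x < 1/5) : 8*x^3 + 4*x - 1 < 0 := by
  nlinarith [mul_pos (mul_pos h0 h0) h0, mul_pos h0 h0, sq_nonneg x, mul_pos h0 (mul_pos h0 (sub_pos.2 h))]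

set_option maxHeartbeats 2000000 in
/-- the equation `conj z ^ 4 = z ^ 2 - (1/2) z + 1/15` has exactly
10 complex solutions. -/
theorem stmt_10 :
    {z : ℂ | (starRingEnd ℂ z) ^ 4 = z ^ 2 - (1 / 2) * z + 1 / 15}.Finite ∧
      {z : ℂ | (starRingEnd ℂ z) ^ 4 = z ^ 2 - (1 / 2) * z + 1 / 15}.ncard = 10 := by
  have cQ : Continuous (fun x : ℝ => 30*x^4 - 30*x^2 + 15*x - 2) := by continuity
  have cP : Continuous (fun x : ℝ => -3840*x^6 - 1920*x^4 + 960*x^3 + 656*x^2 - 240*x + 15) := by continuity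
  obtain ⟨r1, hr1a, hr1b, hr1⟩ := stmt10_ivt_pn cQ (by norm_num : (-13/10:ℝ) ≤ -11/10) (by norm_num) (by norm_num)
  obtain ⟨r2, hr2a, hr2b, hr2⟩ := stmt10_ivt_np cQ (by norm_num : (1/5:ℝ) ≤ 3/10) (by norm_num) (by norm_num)
  obtain ⟨r3, hr3a, hr3b, hr3⟩ := stmt10_ivt_pn cQ (by norm_num : (9/25:ℝ) ≤ 1/2) (by norm_num) (by norm_num)
  obtain ⟨r4, hr4a, hr4b, hr4⟩ := stmt10_ivt_np cQ (by norm_num : (1/2:ℝ) ≤ 3/5) (by norm_num) (by norm_num)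
  obtain ⟨p0, hp0a, hp0b, hp0⟩ := stmt10_ivt_pn cP (by norm_num : (0:ℝ) ≤ 1/5) (by norm_num) (by norm_num)
  obtain ⟨w1, hw1a, hw1b, hw1⟩ := stmt10_ivt_np cP (by norm_num : (-1/2:ℝ) ≤ -17/50) (by norm_num) (by norm_num)
  obtain ⟨w2, hw2a, hw2b, hw2⟩ := stmt10_ivt_np cP (by norm_num : (227/1000:ℝ) ≤ 3/10) (by norm_num) (by norm_num)
  obtain ⟨w3, hw3a, hw3b, hw3⟩ := stmt10_ivt_pn cP (by norm_num : (12/25:ℝ) ≤ 3/5) (by norm_num) (by norm_num)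
  -- root enumeration
  have Qcomplete : ∀ x : ℝ, 30*x^4 - 30*x^2 + 15*x - 2 = 0 → x = r1 ∨ x = r2 ∨ x = r3 ∨ x = r4 := by
    intro x hx
    exact stmt10_four_roots pQ_card (by intro h; linarith) (by intro h; linarith)
      (by intro h; linarith) (by intro h; linarith) (by intro h; linarith) (by intro h; linarith)
      (Qroot_mem hr1) (Qroot_mem hr2) (Qroot_mem hr3) (Qroot_mem hr4) (Qroot_mem hx)
  have Pcomplete : ∀ x : ℝ, -3840*x^6 - 1920*x^4 + 960*x^3 + 656*x^2 - 240*x + 15 = 0 →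
      x = p0 ∨ x = w1 ∨ x = w2 ∨ x = w3 := by
    intro x hx
    exact stmt10_four_roots pP_card (by intro h; linarith) (by intro h; linarith)
      (by intro h; linarith) (by intro h; linarith) (by intro h; linarith) (by intro h; linarith)
      (Proot_mem hp0) (Proot_mem hw1) (Proot_mem hw2) (Proot_mem hw3) (Proot_mem hx)
  -- imaginary parts
  have hgw1 : 8*w1^3 + 4*w1 - 1 < 0 := by
    have h3 : w1^3 < 0 := Odd.pow_neg (by decide) (by linarith)
    linarith
  have hgw2 : 0 < 8*w2^3 + 4*w2 - 1 := stmt10_gpos1 hw2a.le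
  have hgw3 : 0 < 8*w3^3 + 4*w3 - 1 := stmt10_gpos2 hw3a.le
  have ht1 : 0 < (8*w1^3 + 4*w1 - 1)/(8*w1) := div_pos_of_neg_of_neg hgw1 (by linarith)
  have ht2 : 0 < (8*w2^3 + 4*w2 - 1)/(8*w2) := div_pos hgw2 (by linarith)
  have ht3 : 0 < (8*w3^3 + 4*w3 - 1)/(8*w3) := div_pos hgw3 (by linarith)
  set y1 := Real.sqrt ((8*w1^3 + 4*w1 - 1)/(8*w1)) with hy1def
  set y2 := Real.sqrt ((8*w2^3 + 4*w2 - 1)/(8*w2)) with hy2def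
  set y3 := Real.sqrt ((8*w3^3 + 4*w3 - 1)/(8*w3)) with hy3def
  have hy1 : 0 < y1 := Real.sqrt_pos.mpr ht1
  have hy2 : 0 < y2 := Real.sqrt_pos.mpr ht2
  have hy3 : 0 < y3 := Real.sqrt_pos.mpr ht3
  have hy1sq : y1^2 = (8*w1^3 + 4*w1 - 1)/(8*w1) := Real.sq_sqrt ht1.le
  have hy2sq : y2^2 = (8*w2^3 + 4*w2 - 1)/(8*w2) := Real.sq_sqrt ht2.le
  have hy3sq : y3^2 = (8*w3^3 + 4*w3 - 1)/(8*w3) := Real.sq_sqrt ht3.le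
  have hw1ne : w1 ≠ 0 := ne_of_lt (by linarith)
  have hw2ne : w2 ≠ 0 := ne_of_gt (by linarith)
  have hw3ne : w3 ≠ 0 := ne_of_gt (by linarith)
  have h2w1 : 8*w1*y1^2 = 8*w1^3 + 4*w1 - 1 := by
    rw [hy1sq]; field_simp
  have h2w2 : 8*w2*y2^2 = 8*w2^3 + 4*w2 - 1 := by
    rw [hy2sq]; field_simp
  have h2w3 : 8*w3*y3^2 = 8*w3^3 + 4*w3 - 1 := by
    rw [hy3sq]; field_simp
  have hSeq : {z : ℂ | (starRingEnd ℂ z) ^ 4 = z ^ 2 - (1 / 2) * z + 1 / 15} =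
      ({⟨r1,0⟩, ⟨r2,0⟩, ⟨r3,0⟩, ⟨r4,0⟩, ⟨w1,y1⟩, ⟨w1,-y1⟩, ⟨w2,y2⟩, ⟨w2,-y2⟩, ⟨w3,y3⟩, ⟨w3,-y3⟩} : Set ℂ) := by
    ext z
    simp only [Set.mem_setOf_eq, Set.mem_insert_iff, Set.mem_singleton_iff]
    rw [stmt10_mem_iff]
    constructor
    · rintro ⟨h1, h2⟩
      by_cases hy : z.im = 0
      · rw [hy] at h1
        have hQ : 30*z.re^4 - 30*z.re^2 + 15*z.re - 2 = 0 := by linear_combination 30*h1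
        rcases Qcomplete z.re hQ with h|h|h|h
        · exact Or.inl (Complex.ext h hy)
        · exact Or.inr (Or.inl (Complex.ext h hy))
        · exact Or.inr (Or.inr (Or.inl (Complex.ext h hy)))
        · exact Or.inr (Or.inr (Or.inr (Or.inl (Complex.ext h hy))))
      · have h5 : z.im * (8*z.re*z.im^2 - (8*z.re^3 + 4*z.re - 1)) = 0 := by linear_combination 2*h2
        have h6 : 8*z.re*z.im^2 = 8*z.re^3 + 4*z.re - 1 := by
          rcases mul_eq_zero.mp h5 with h|h
          · exact absurd h hy
          · linarith
        have hx0 : z.re ≠ 0 := by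
          intro h; rw [h] at h6; norm_num at h6
        have hP : -3840*z.re^6 - 1920*z.re^4 + 960*z.re^3 + 656*z.re^2 - 240*z.re + 15 = 0 := by
          linear_combination (960*z.re^2)*h1 - (15*(8*z.re*z.im^2 + (8*z.re^3+4*z.re-1) + 8*z.re - 48*z.re^3))*h6
        have hx2 : 0 < z.re^2 := lt_of_le_of_ne (sq_nonneg _) (Ne.symm (pow_ne_zero 2 hx0))
        have him2 : 0 < z.im^2 := lt_of_le_of_ne (sq_nonneg _) (Ne.symm (pow_ne_zero 2 hy))
        have hxg : 0 < z.re*(8*z.re^3 + 4*z.re - 1) := by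
          have hprod : z.re*(8*z.re^3 + 4*z.re - 1) = 8*(z.re^2*z.im^2) := by
            linear_combination (-z.re)*h6
          rw [hprod]
          exact mul_pos (by norm_num) (mul_pos hx2 him2)
        rcases Pcomplete z.re hP with h|h|h|h
        · exfalso
          have hgp : 8*p0^3 + 4*p0 - 1 < 0 := stmt10_gneg hp0a hp0b
          rw [h] at hxg
          exact (mul_neg_of_pos_of_neg hp0a hgp).asymm hxg
        · have h9 : 8*w1*(z.im^2 - y1^2) = 0 := by rw [h] at h6; linear_combination h6 - h2w1
          have h10 : (z.im - y1)*(z.im + y1) = 0 := by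
            have := (mul_eq_zero.mp h9).resolve_left (by intro hc; linarith)
            linear_combination this
          rcases mul_eq_zero.mp h10 with h11|h11
          · exact Or.inr (Or.inr (Or.inr (Or.inr (Or.inl (Complex.ext h (by linarith))))))
          · exact Or.inr (Or.inr (Or.inr (Or.inr (Or.inr (Or.inl (Complex.ext h (by dsimp; linarith)))))))
        · have h9 : 8*w2*(z.im^2 - y2^2) = 0 := by rw [h] at h6; linear_combination h6 - h2w2
          have h10 : (z.im - y2)*(z.im + y2) = 0 := by
            have := (mul_eq_zero.mp h9).resolve_left (by intro hc; linarith)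
            linear_combination this
          rcases mul_eq_zero.mp h10 with h11|h11
          · exact Or.inr (Or.inr (Or.inr (Or.inr (Or.inr (Or.inr (Or.inl (Complex.ext h (by linarith))))))))
          · exact Or.inr (Or.inr (Or.inr (Or.inr (Or.inr (Or.inr (Or.inr (Or.inl (Complex.ext h (by dsimp; linarith)))))))))
        · have h9 : 8*w3*(z.im^2 - y3^2) = 0 := by rw [h] at h6; linear_combination h6 - h2w3
          have h10 : (z.im - y3)*(z.im + y3) = 0 := by
            have := (mul_eq_zero.mp h9).resolve_left (by intro hc; linarith)
            linear_combination this
          rcases mul_eq_zero.mp h10 with h11|h11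
          · exact Or.inr (Or.inr (Or.inr (Or.inr (Or.inr (Or.inr (Or.inr (Or.inr (Or.inl (Complex.ext h (by linarith))))))))))
          · exact Or.inr (Or.inr (Or.inr (Or.inr (Or.inr (Or.inr (Or.inr (Or.inr (Or.inr (Complex.ext h (by dsimp; linarith))))))))))
    · intro hz
      rcases hz with rfl|rfl|rfl|rfl|rfl|rfl|rfl|rfl|rfl|rfl
      · exact ⟨by dsimp; linear_combination (1/30)*hr1, by dsimp; ring⟩
      · exact ⟨by dsimp; linear_combination (1/30)*hr2, by dsimp; ring⟩
      · exact ⟨by dsimp; linear_combination (1/30)*hr3, by dsimp; ring⟩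
      · exact ⟨by dsimp; linear_combination (1/30)*hr4, by dsimp; ring⟩
      · exact stmt10_sol_nonreal hw1 h2w1 hw1ne
      · have h2w1' : 8*w1*(-y1)^2 = 8*w1^3 + 4*w1 - 1 := by linear_combination h2w1
        exact stmt10_sol_nonreal hw1 h2w1' hw1ne
      · exact stmt10_sol_nonreal hw2 h2w2 hw2ne
      · have h2w2' : 8*w2*(-y2)^2 = 8*w2^3 + 4*w2 - 1 := by linear_combination h2w2
        exact stmt10_sol_nonreal hw2 h2w2' hw2ne
      · exact stmt10_sol_nonreal hw3 h2w3 hw3ne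
      · have h2w3' : 8*w3*(-y3)^2 = 8*w3^3 + 4*w3 - 1 := by linear_combination h2w3
        exact stmt10_sol_nonreal hw3 h2w3' hw3ne
  rw [hSeq]
  constructor
  · exact ((((((((((Set.finite_singleton _).insert _)).insert _).insert _).insert _).insert _).insert _).insert _).insert _).insert _
  · have n8 : ({⟨w3,y3⟩, ⟨w3,-y3⟩} : Set ℂ).ncard = 2 := Set.ncard_pair (stmt10_cne_im (by intro h; linarith))
    have n7 : ({⟨w2,-y2⟩, ⟨w3,y3⟩, ⟨w3,-y3⟩} : Set ℂ).ncard = 3 := by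
      rw [Set.ncard_insert_of_notMem (by simp only [Set.mem_insert_iff, Set.mem_singleton_iff]; push_neg; exact ⟨stmt10_cne_re (by intro h; linarith), stmt10_cne_re (by intro h; linarith)⟩) (((Set.finite_singleton _).insert _)), n8]
    have n6 : ({⟨w2,y2⟩, ⟨w2,-y2⟩, ⟨w3,y3⟩, ⟨w3,-y3⟩} : Set ℂ).ncard = 4 := by
      rw [Set.ncard_insert_of_notMem (by simp only [Set.mem_insert_iff, Set.mem_singleton_iff]; push_neg; exact ⟨stmt10_cne_im (by intro h; linarith), stmt10_cne_re (by intro h; linarith), stmt10_cne_re (by intro h; linarith)⟩) ((((Set.finite_singleton _).insert _).insert _)), n7]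
    have n5 : ({⟨w1,-y1⟩, ⟨w2,y2⟩, ⟨w2,-y2⟩, ⟨w3,y3⟩, ⟨w3,-y3⟩} : Set ℂ).ncard = 5 := by
      rw [Set.ncard_insert_of_notMem (by simp only [Set.mem_insert_iff, Set.mem_singleton_iff]; push_neg; exact ⟨stmt10_cne_re (by intro h; linarith), stmt10_cne_re (by intro h; linarith), stmt10_cne_re (by intro h; linarith), stmt10_cne_re (by intro h; linarith)⟩) (((((Set.finite_singleton _).insert _).insert _).insert _)), n6]
    have n4 : ({⟨w1,y1⟩, ⟨w1,-y1⟩, ⟨w2,y2⟩, ⟨w2,-y2⟩, ⟨w3,y3⟩, ⟨w3,-y3⟩} : Set ℂ).ncard = 6 := by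
      rw [Set.ncard_insert_of_notMem (by simp only [Set.mem_insert_iff, Set.mem_singleton_iff]; push_neg; exact ⟨stmt10_cne_im (by intro h; linarith), stmt10_cne_re (by intro h; linarith), stmt10_cne_re (by intro h; linarith), stmt10_cne_re (by intro h; linarith), stmt10_cne_re (by intro h; linarith)⟩) ((((((Set.finite_singleton _).insert _).insert _).insert _).insert _)), n5]
    have n3 : ({⟨r4,0⟩, ⟨w1,y1⟩, ⟨w1,-y1⟩, ⟨w2,y2⟩, ⟨w2,-y2⟩, ⟨w3,y3⟩, ⟨w3,-y3⟩} : Set ℂ).ncard = 7 := by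
      rw [Set.ncard_insert_of_notMem (by simp only [Set.mem_insert_iff, Set.mem_singleton_iff]; push_neg; exact ⟨stmt10_cne_im (by intro h; linarith), stmt10_cne_im (by intro h; linarith), stmt10_cne_im (by intro h; linarith), stmt10_cne_im (by intro h; linarith), stmt10_cne_im (by intro h; linarith), stmt10_cne_im (by intro h; linarith)⟩) (((((((Set.finite_singleton _).insert _).insert _).insert _).insert _).insert _)), n4]
    have n2 : ({⟨r3,0⟩, ⟨r4,0⟩, ⟨w1,y1⟩, ⟨w1,-y1⟩, ⟨w2,y2⟩, ⟨w2,-y2⟩, ⟨w3,y3⟩, ⟨w3,-y3⟩} : Set ℂ).ncard = 8 := by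
      rw [Set.ncard_insert_of_notMem (by simp only [Set.mem_insert_iff, Set.mem_singleton_iff]; push_neg; exact ⟨stmt10_cne_re (by intro h; linarith), stmt10_cne_im (by intro h; linarith), stmt10_cne_im (by intro h; linarith), stmt10_cne_im (by intro h; linarith), stmt10_cne_im (by intro h; linarith), stmt10_cne_im (by intro h; linarith), stmt10_cne_im (by intro h; linarith)⟩) ((((((((Set.finite_singleton _).insert _).insert _).insert _).insert _).insert _).insert _)), n3]
    have n1 : ({⟨r2,0⟩, ⟨r3,0⟩, ⟨r4,0⟩, ⟨w1,y1⟩, ⟨w1,-y1⟩, ⟨w2,y2⟩, ⟨w2,-y2⟩, ⟨w3,y3⟩, ⟨w3,-y3⟩} : Set ℂ).ncard = 9 := by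
      rw [Set.ncard_insert_of_notMem (by simp only [Set.mem_insert_iff, Set.mem_singleton_iff]; push_neg; exact ⟨stmt10_cne_re (by intro h; linarith), stmt10_cne_re (by intro h; linarith), stmt10_cne_im (by intro h; linarith), stmt10_cne_im (by intro h; linarith), stmt10_cne_im (by intro h; linarith), stmt10_cne_im (by intro h; linarith), stmt10_cne_im (by intro h; linarith), stmt10_cne_im (by intro h; linarith)⟩) (((((((((Set.finite_singleton _).insert _).insert _).insert _).insert _).insert _).insert _).insert _)), n2]
    have n0 : ({⟨r1,0⟩, ⟨r2,0⟩, ⟨r3,0⟩, ⟨r4,0⟩, ⟨w1,y1⟩, ⟨w1,-y1⟩, ⟨w2,y2⟩, ⟨w2,-y2⟩, ⟨w3,y3⟩, ⟨w3,-y3⟩} : Set ℂ).ncard = 10 := by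
      rw [Set.ncard_insert_of_notMem (by simp only [Set.mem_insert_iff, Set.mem_singleton_iff]; push_neg; exact ⟨stmt10_cne_re (by intro h; linarith), stmt10_cne_re (by intro h; linarith), stmt10_cne_re (by intro h; linarith), stmt10_cne_im (by intro h; linarith), stmt10_cne_im (by intro h; linarith), stmt10_cne_im (by intro h; linarith), stmt10_cne_im (by intro h; linarith), stmt10_cne_im (by intro h; linarith), stmt10_cne_im (by intro h; linarith)⟩) ((((((((((Set.finite_singleton _).insert _).insert _).insert _).insert _).insert _).insert _).insert _).insert _)), n1]
    exact n0
end

section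
/- Let f(z) = h(z) + conj(g(z)) be a complex-valued harmonic polynomial, where h and g are complex polynomials with deg h = n > m = deg g, and suppose f(z) tends to infinity in modulus as |z| tends to infinity. Then f has at most n^2 zeros; that is, the set {z ∈ ℂ : h(z) + conj(g(z)) = 0} is finite with cardinality at most n^2. -/
/-!
A point `z` is a zero of `h + conj ∘ g` exactly when `w = conj z` is a common root of the two
polynomials `conj g (w) + h z` and `conj h (w) + g z` in `w`. Their resultant with respect to `w`
is therefore a polynomial in `z` vanishing at every zero, and since both polynomials have total
degree at most `n` in `(z, w)`, it has degree at most `n ^ 2` (Bezout's bound).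

It remains to see that this resultant is not identically zero. The function `|h| - |g|` is
bounded below and tends to infinity; a common root `w` for a given `z₀` would give `u = conj w`
with `|h u| = |g z₀|` and `|g u| = |h z₀|`, so `|h| - |g|` would take the value
`-(|h z₀| - |g z₀|)` at `u`, which is impossible once `|h z₀| - |g z₀|` is large.
-/

open Polynomial Filter Bornology ComplexConjugate

theorem Matrix.natDegree_det_le_of_weight {ι R : Type*} [Fintype ι] [DecidableEq ι] [CommRing R]
    (M : Matrix ι ι R[X]) (a b : ι → ℕ) (hM : ∀ i j, M i j ≠ 0 → (M i j).natDegree + a i ≤ b j) :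
    M.det.natDegree ≤ ∑ j, b j - ∑ i, a i := by
  rw [Matrix.det_apply]
  refine natDegree_sum_le_of_forall_le _ _ fun σ _ => (natDegree_smul_le _ _).trans ?_
  by_cases hzero : ∃ j, M (σ j) j = 0
  · obtain ⟨j, hj⟩ := hzero
    rw [Finset.prod_eq_zero (f := fun i => M (σ i) i) (Finset.mem_univ j) hj, natDegree_zero]
    exact Nat.zero_le _
  push Not at hzero
  have hsum : ∑ j, ((M (σ j) j).natDegree + a (σ j)) ≤ ∑ j, b j :=
    Finset.sum_le_sum fun j _ => hM _ _ (hzero j)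
  rw [Finset.sum_add_distrib, Equiv.sum_comp σ a] at hsum
  exact (natDegree_prod_le _ _).trans (by omega)

namespace Polynomial

/-- Bezout's bound: `hF` and `hG` say that `F` and `G`, read as polynomials in two variables,
have total degree at most `d` and `e`. -/
theorem natDegree_resultant_le {R : Type*} [CommRing R] {F G : R[X][X]} {m n d e : ℕ}
    (hF : ∀ k ≤ m, (F.coeff k).natDegree + k ≤ d) (hG : ∀ k ≤ n, (G.coeff k).natDegree + k ≤ e) :
    (resultant F G m n).natDegree ≤ d * e := by
  have hmd : m ≤ d := (Nat.le_add_left _ _).trans (hF m le_rfl)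
  have hne : n ≤ e := (Nat.le_add_left _ _).trans (hG n le_rfl)
  -- weight the row `i` of the Sylvester matrix by `i`, a column of shift `j` by `e + j` or `d + j`
  calc (resultant F G m n).natDegree
      ≤ ∑ c : Fin (m + n), Fin.addCases (fun j => e + (j : ℕ)) (fun j => d + (j : ℕ)) c
        - ∑ i : Fin (m + n), (i : ℕ) := by
        refine Matrix.natDegree_det_le_of_weight _ _ _ fun i c hc => ?_
        induction c using Fin.addCases with
        | left j =>
          simp only [sylvester, Matrix.of_apply, Fin.addCases_left, Set.mem_Icc] at hc ⊢
          split_ifs at hc ⊢ with hij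
          · have := hG (i - j) (by omega)
            omega
          · exact absurd rfl hc
        | right j =>
          simp only [sylvester, Matrix.of_apply, Fin.addCases_right, Set.mem_Icc] at hc ⊢
          split_ifs at hc ⊢ with hij
          · have := hF (i - j) (by omega)
            omega
          · exact absurd rfl hc
    _ = m * e + n * d - n * m := by
        simp only [Fin.sum_univ_add, Fin.addCases_left, Fin.addCases_right, Fin.val_castAdd,
          Fin.val_natAdd, Finset.sum_add_distrib, Finset.sum_const, Finset.card_univ,
          Fintype.card_fin, smul_eq_mul]
        omega
    _ ≤ d * e := by
        obtain ⟨x, rfl⟩ := Nat.exists_eq_add_of_le hmd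
        obtain ⟨y, rfl⟩ := Nat.exists_eq_add_of_le hne
        rw [Nat.sub_le_iff_le_add]
        nlinarith

theorem resultant_eq_zero_of_isRoot {R : Type*} [CommRing R] {f g : R[X]} {m n : ℕ}
    (hf : f.natDegree ≤ m) (hg : g.natDegree ≤ n) (hmn : m ≠ 0 ∨ n ≠ 0) {a : R}
    (hfa : f.IsRoot a) (hga : g.IsRoot a) : resultant f g m n = 0 := by
  obtain ⟨p, q, -, -, hpq⟩ := exists_mul_add_mul_eq_C_resultant f g hf hg hmn
  simpa [hfa.eq_zero, hga.eq_zero] using congr_arg (eval a) hpq.symm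

theorem resultant_ne_zero_of_isAlgClosed {K : Type*} [Field K] [IsAlgClosed K]
    {f g : K[X]} (hfg : ∀ a, f.IsRoot a → ¬ g.IsRoot a) : resultant f g ≠ 0 := by
  refine resultant_ne_zero f g ((isCoprime_iff_aeval_ne_zero_of_isAlgClosed K K f g).2 fun a => ?_)
  simp only [coe_aeval_eq_eval]
  by_cases ha : f.IsRoot a
  · exact Or.inr (hfg a ha)
  · exact Or.inl ha

theorem finite_and_ncard_le_of_forall_isRoot {R : Type*} [CommRing R] [IsDomain R]
    {p : R[X]} (hp : p ≠ 0) {S : Set R} (hS : ∀ z ∈ S, p.IsRoot z) :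
    S.Finite ∧ S.ncard ≤ p.natDegree := by
  classical
  have hsub : S ⊆ p.roots.toFinset := fun z hz => by simpa [hp] using hS z hz
  refine ⟨p.roots.toFinset.finite_toSet.subset hsub, ?_⟩
  calc S.ncard ≤ (p.roots.toFinset : Set R).ncard := Set.ncard_le_ncard hsub
    _ = p.roots.toFinset.card := Set.ncard_coe_finset _
    _ ≤ p.natDegree := (Multiset.toFinset_card_le _).trans (card_roots' p)

theorem tendsto_norm_eval_sub_norm_eval {𝕜 : Type*} [NormedField 𝕜] {p q : 𝕜[X]}
    (hqp : q.natDegree < p.natDegree) :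
    Tendsto (fun x => ‖p.eval x‖ - ‖q.eval x‖) (cobounded 𝕜) atTop := by
  have hp : Tendsto (fun x => ‖p.eval x‖) (cobounded 𝕜) atTop :=
    p.tendsto_norm_atTop (natDegree_pos_iff_degree_pos.mp (by omega)) tendsto_norm_cobounded_atTop
  have hq : ∀ᶠ x in cobounded 𝕜, ‖q.eval x‖ ≤ 2⁻¹ * ‖p.eval x‖ :=
    (isLittleO_cobounded_of_degree_lt (degree_lt_degree hqp)).def (by norm_num)
  refine tendsto_atTop_mono' _ ?_ (hp.const_mul_atTop (by norm_num : (0 : ℝ) < 2⁻¹))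
  filter_upwards [hq] with x hx
  linarith

theorem exists_forall_norm_eval_ne {𝕜 : Type*} [NontriviallyNormedField 𝕜] [ProperSpace 𝕜]
    {p q : 𝕜[X]} (hqp : q.natDegree < p.natDegree) :
    ∃ z₀ : 𝕜, ∀ u, ‖p.eval u‖ = ‖q.eval z₀‖ → ‖q.eval u‖ ≠ ‖p.eval z₀‖ := by
  have hψ := tendsto_norm_eval_sub_norm_eval hqp
  obtain ⟨x₀, hx₀⟩ := (by fun_prop : Continuous fun x => ‖p.eval x‖ - ‖q.eval x‖).exists_forall_le
    (Metric.cobounded_eq_cocompact (α := 𝕜) ▸ hψ)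
  obtain ⟨z₀, hz₀⟩ := (hψ.eventually_gt_atTop (-(‖p.eval x₀‖ - ‖q.eval x₀‖))).exists
  refine ⟨z₀, fun u hpu hqu => ?_⟩
  have := hx₀ u
  rw [hpu, hqu] at this
  linarith

theorem eval_map_conj (p : ℂ[X]) (w : ℂ) : (p.map conj).eval w = conj (p.eval (conj w)) := by
  rw [eval_map, ← eval₂_at_apply, Complex.conj_conj]

end Polynomial

/-- The resultant, with respect to `w`, of `conj g (w) + h z` and `conj h (w) + g z`, viewed as
polynomials in `w` with coefficients in `ℂ[z]`. -/
noncomputable def harmonicResultant (h g : ℂ[X]) : ℂ[X] :=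
  resultant ((g.map conj).map C + C h) ((h.map conj).map C + C g) g.natDegree h.natDegree

theorem eval_harmonicResultant (h g : ℂ[X]) (z : ℂ) :
    (harmonicResultant h g).eval z =
      resultant (g.map conj + C (h.eval z)) (h.map conj + C (g.eval z)) g.natDegree h.natDegree := by
  rw [harmonicResultant, ← coe_evalRingHom, ← resultant_map_map]
  have hC : (evalRingHom z).comp C = RingHom.id ℂ := RingHom.ext fun _ => eval_C
  congr 1 <;> simp [Polynomial.map_map, ← RingHom.comp_assoc, hC]

theorem isRoot_harmonicResultant {h g : ℂ[X]} (hh : h.natDegree ≠ 0) {z : ℂ}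
    (hz : h.eval z + conj (g.eval z) = 0) : (harmonicResultant h g).IsRoot z := by
  rw [IsRoot, eval_harmonicResultant]
  refine resultant_eq_zero_of_isRoot (a := conj z) ?_ ?_ (Or.inr hh) ?_ ?_
  · rw [natDegree_add_C, natDegree_map]
  · rw [natDegree_add_C, natDegree_map]
  · simp [IsRoot, add_comm, hz]
  · simpa [IsRoot, eval_map_conj] using congr_arg conj hz

theorem harmonicResultant_ne_zero {h g : ℂ[X]} (hgh : g.natDegree < h.natDegree) :
    harmonicResultant h g ≠ 0 := by
  obtain ⟨z₀, hz₀⟩ := exists_forall_norm_eval_ne hgh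
  have norm_eq_of_isRoot {p : ℂ[X]} {c w : ℂ} (hw : (p.map conj + C c).IsRoot w) :
      ‖p.eval (conj w)‖ = ‖c‖ := by
    rw [IsRoot, eval_add, eval_C, eval_map_conj, add_eq_zero_iff_eq_neg] at hw
    rw [← Complex.norm_conj, hw, norm_neg]
  intro h0
  have hres := congr_arg (eval z₀) h0
  rw [eval_harmonicResultant, eval_zero] at hres
  refine resultant_ne_zero_of_isAlgClosed
    (fun w hgw hhw => hz₀ (conj w) (norm_eq_of_isRoot hhw) (norm_eq_of_isRoot hgw)) ?_
  rwa [natDegree_add_C, natDegree_add_C, natDegree_map, natDegree_map]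

theorem natDegree_harmonicResultant_le {h g : ℂ[X]} (hgh : g.natDegree ≤ h.natDegree) :
    (harmonicResultant h g).natDegree ≤ h.natDegree ^ 2 := by
  have hcoeff (p q : ℂ[X]) (hq : q.natDegree ≤ h.natDegree) (k : ℕ) (hk : k ≤ h.natDegree) :
      (((p.map conj).map C + C q).coeff k).natDegree + k ≤ h.natDegree := by
    rcases eq_or_ne k 0 with rfl | hk0
    · simpa [natDegree_C_add] using hq
    · simpa [coeff_C, hk0] using hk
  rw [sq]
  exact natDegree_resultant_le (fun k hk => hcoeff g h le_rfl k (hk.trans hgh)) (hcoeff h g hgh)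

theorem stmt_13_general (h g : Polynomial ℂ) (n m : ℕ)
    (hn : h.natDegree = n) (hm : g.natDegree = m) (hnm : n > m) :
    {z : ℂ | h.eval z + starRingEnd ℂ (g.eval z) = 0}.Finite ∧
      {z : ℂ | h.eval z + starRingEnd ℂ (g.eval z) = 0}.ncard ≤ n ^ 2 := by
  subst hn hm
  obtain ⟨hfin, hcard⟩ := finite_and_ncard_le_of_forall_isRoot (harmonicResultant_ne_zero hnm)
    fun z hz => isRoot_harmonicResultant (by omega) hz
  exact ⟨hfin, hcard.trans (natDegree_harmonicResultant_le hnm.le)⟩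

/-- Wilmshurst's theorem: if `f(z) = h(z) + conj (g z)` with
`deg h = n > m = deg g` and `|f(z)| → ∞` as `|z| → ∞`, then `f` has at most
`n ^ 2` zeros. -/
theorem stmt_13 (h g : Polynomial ℂ) (n m : ℕ)
    (hn : h.natDegree = n) (hm : g.natDegree = m) (hnm : n > m)
    (hinf : Filter.Tendsto (fun z : ℂ => ‖h.eval z + starRingEnd ℂ (g.eval z)‖)
      (Bornology.cobounded ℂ) Filter.atTop) :
    {z : ℂ | h.eval z + starRingEnd ℂ (g.eval z) = 0}.Finite ∧
      {z : ℂ | h.eval z + starRingEnd ℂ (g.eval z) = 0}.ncard ≤ n ^ 2 :=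
  stmt_13_general h g n m hn hm hnm
end

section
/- Let f and g be relatively prime polynomials in the two real variables x and y with real coefficients, with deg f = n and deg g = m. Then the two algebraic curves f(x,y) = 0 and g(x,y) = 0 have at most m*n points in common; that is, the set {(x,y) ∈ ℝ^2 : f(x,y) = 0 and g(x,y) = 0} is finite of cardinality at most m*n. -/
/-!
Let `T` be a set of `t` common zeros of `f` and `g`, of degrees `n` and `m`, and let `V k` be the
space of polynomials of degree at most `k`, of dimension `(k + 1)(k + 2)/2`. In degree
`d = t + m + n` the subspaces `f • V (t + m)` and `g • V (t + n)` of `V d` vanish on `T`, and since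
`f` and `g` are coprime they meet only in `fg • V t`. Products of linear forms show that
polynomials of degree `d ≥ t` take arbitrary values on `T`, so those vanishing on `T` have
codimension `t` in `V d`. Hence `dim V (t + m) + dim V (t + n) - dim V t ≤ dim V d - t`,
which is `t ≤ mn`.
-/

open MvPolynomial Module Finset

namespace Submodule

variable {K M N : Type*} [DivisionRing K] [AddCommGroup M] [Module K M] [AddCommGroup N]
  [Module K N]

theorem finrank_map_add_finrank_inf_ker (f : M →ₗ[K] N) (V : Submodule K M)
    [FiniteDimensional K V] :
    finrank K (V.map f) + finrank K ↥(V ⊓ LinearMap.ker f) = finrank K V := by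
  rw [← (f.domRestrict V).finrank_range_add_finrank_ker, LinearMap.range_domRestrict,
    LinearMap.ker_domRestrict, ← map_comap_subtype,
    ← (equivMapOfInjective _ V.injective_subtype _).finrank_eq]

end Submodule

theorem Nat.card_add_le_mul_two (d : ℕ) :
    Nat.card {x : ℕ × ℕ // x.1 + x.2 ≤ d} * 2 = (d + 1) * (d + 2) := by
  have hset : {x : ℕ × ℕ | x.1 + x.2 ≤ d} = ↑((range (d + 1)).biUnion antidiagonal) := by
    ext x
    simp
  have hdisj : (range (d + 1) : Set ℕ).PairwiseDisjoint antidiagonal := fun i _ j _ hij =>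
    disjoint_left.2 fun x hi hj => hij ((mem_antidiagonal.1 hi).symm.trans (mem_antidiagonal.1 hj))
  rw [← Set.coe_ofPred, hset, Nat.card_coe_set_eq, Set.ncard_coe_finset, card_biUnion hdisj]
  clear hset hdisj
  induction d with
  | zero => rfl
  | succ d ih => rw [sum_range_succ, add_mul, ih, Nat.card_antidiagonal]; ring

theorem Set.finite_and_ncard_le_of_forall_finset_card_le {α : Type*} {s : Set α} {N : ℕ}
    (h : ∀ t : Finset α, ↑t ⊆ s → #t ≤ N) : s.Finite ∧ s.ncard ≤ N := by
  have hs : s.Finite := by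
    by_contra hinf
    obtain ⟨t, hts, ht⟩ := Set.Infinite.exists_subset_card_eq hinf (N + 1)
    exact absurd (h t hts) (by omega)
  refine ⟨hs, ?_⟩
  rw [Set.ncard_eq_toFinset_card s hs]
  exact h _ (by simp)

namespace MvPolynomial

section CommSemiring

variable {σ R : Type*} [CommSemiring R]

noncomputable def evalOn (T : Finset (σ → R)) : MvPolynomial σ R →ₗ[R] (T → R) :=
  LinearMap.pi fun q => (aeval q.1).toLinearMap

@[simp]
theorem evalOn_apply (T : Finset (σ → R)) (r : MvPolynomial σ R) (q : T) :
    evalOn T r q = eval q.1 r := by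
  simp [evalOn]

theorem mem_ker_evalOn {T : Finset (σ → R)} {r : MvPolynomial σ R} :
    r ∈ LinearMap.ker (evalOn T) ↔ ∀ q ∈ T, eval q r = 0 := by
  rw [LinearMap.mem_ker]
  constructor
  · intro h q hq
    simpa using congrFun h ⟨q, hq⟩
  · intro h
    ext q
    simpa using h q.1 q.2

theorem range_mulLeft_le_ker_evalOn {T : Finset (σ → R)} {f : MvPolynomial σ R}
    (hf : ∀ q ∈ T, eval q f = 0) :
    LinearMap.range (LinearMap.mulLeft R f) ≤ LinearMap.ker (evalOn T) := by
  rintro _ ⟨x, rfl⟩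
  rw [mem_ker_evalOn]
  intro q hq
  simp [hf q hq]

theorem map_mulLeft_restrictTotalDegree_le (f : MvPolynomial σ R) (a : ℕ) :
    (restrictTotalDegree σ R a).map (LinearMap.mulLeft R f) ≤
      restrictTotalDegree σ R (f.totalDegree + a) := by
  rintro _ ⟨x, hx, rfl⟩
  rw [SetLike.mem_coe, mem_restrictTotalDegree] at hx
  rw [LinearMap.mulLeft_apply, mem_restrictTotalDegree]
  exact (totalDegree_mul f x).trans (Nat.add_le_add_left hx _)

end CommSemiring

variable {σ K : Type*} [Field K]

theorem exists_separating_of_notMem {T : Finset (σ → K)} {p : σ → K} (hp : p ∉ T) :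
    ∃ r : MvPolynomial σ K, r.totalDegree ≤ #T ∧ eval p r ≠ 0 ∧ ∀ q ∈ T, eval q r = 0 := by
  classical
  induction T using Finset.induction_on with
  | empty => exact ⟨1, by simp, by simp, by simp⟩
  | insert q T hqT ih =>
    obtain ⟨r, hdeg, hrp, hrT⟩ := ih fun h => hp (mem_insert_of_mem h)
    obtain ⟨i, hi⟩ := Function.ne_iff.1 fun h : q = p => hp (h ▸ mem_insert_self q T)
    refine ⟨(X i - C (q i)) * r, ?_, by simp [hrp, sub_ne_zero.2 hi.symm], ?_⟩
    · calc ((X i - C (q i)) * r).totalDegree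
          ≤ (X i - C (q i)).totalDegree + r.totalDegree := totalDegree_mul _ _
        _ ≤ 1 + #T := add_le_add ((totalDegree_sub_C_le _ _).trans (totalDegree_X i).le) hdeg
        _ = #(insert q T) := by rw [card_insert_of_notMem hqT, add_comm]
    · simp only [mem_insert, forall_eq_or_imp]
      exact ⟨by simp, fun q' hq' => by simp [hrT q' hq']⟩

theorem map_evalOn_restrictTotalDegree {T : Finset (σ → K)} {d : ℕ} (hT : #T ≤ d + 1) :
    (restrictTotalDegree σ K d).map (evalOn T) = ⊤ := by
  classical
  refine eq_top_iff.2 fun v _ => ?_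
  rw [pi_eq_sum_univ v]
  refine Submodule.sum_mem _ fun q _ => Submodule.smul_mem _ _ ?_
  obtain ⟨r, hdeg, hrq, hrT⟩ := exists_separating_of_notMem (notMem_erase q.1 T)
  refine ⟨(eval q.1 r)⁻¹ • r, ?_, ?_⟩
  · rw [SetLike.mem_coe, mem_restrictTotalDegree]
    refine (totalDegree_smul_le _ _).trans (hdeg.trans ?_)
    rw [card_erase_of_mem q.2]
    omega
  · funext j
    by_cases hqj : q = j
    · subst hqj
      simp [hrq]
    · simp [hqj, hrT j (mem_erase.2 ⟨fun h => hqj (Subtype.ext h.symm), j.2⟩)]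

theorem finrank_restrictTotalDegree_fin_two (d : ℕ) :
    finrank K (restrictTotalDegree (Fin 2) K d) * 2 = (d + 1) * (d + 2) := by
  rw [restrictTotalDegree, finrank_eq_nat_card_basis (basisRestrictSupport K _),
    ← Nat.card_add_le_mul_two d]
  congr 1
  exact Nat.card_congr <| Equiv.subtypeEquiv
    (Finsupp.equivFunOnFinite.trans (finTwoArrowEquiv ℕ)) fun s => by simp [Finsupp.sum_fintype]

theorem map_mulLeft_inf_map_mulLeft_le {f g : MvPolynomial σ K} (hfg : IsRelPrime f g)
    (hg : g ≠ 0) (a b : ℕ) :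
    (restrictTotalDegree σ K (a + g.totalDegree)).map (LinearMap.mulLeft K f) ⊓
        (restrictTotalDegree σ K b).map (LinearMap.mulLeft K g) ≤
      (restrictTotalDegree σ K a).map (LinearMap.mulLeft K (f * g)) := by
  rintro _ ⟨⟨x, hx, rfl⟩, y, -, hxy⟩
  obtain ⟨z, rfl⟩ : g ∣ x := hfg.symm.dvd_of_dvd_mul_left ⟨y, hxy.symm⟩
  refine ⟨z, ?_, by simp⟩
  rcases eq_or_ne z 0 with rfl | hz
  · exact zero_mem _
  rw [SetLike.mem_coe, mem_restrictTotalDegree] at hx ⊢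
  rw [totalDegree_mul_of_isDomain hg hz] at hx
  omega

theorem ne_zero_of_isRelPrime_of_eval_eq_zero {f g : MvPolynomial σ K} (hfg : IsRelPrime f g)
    {q : σ → K} (hg : eval q g = 0) : f ≠ 0 := by
  rintro rfl
  exact ((hfg (dvd_zero g) dvd_rfl).map (eval q)).ne_zero hg

theorem card_le_totalDegree_mul_of_isRelPrime {f g : MvPolynomial (Fin 2) K}
    (hfg : IsRelPrime f g) {T : Finset (Fin 2 → K)}
    (hT : ∀ q ∈ T, eval q f = 0 ∧ eval q g = 0) : #T ≤ f.totalDegree * g.totalDegree := by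
  obtain rfl | ⟨q, hq⟩ := T.eq_empty_or_nonempty
  · simp
  have hf : f ≠ 0 := ne_zero_of_isRelPrime_of_eval_eq_zero hfg (hT q hq).2
  have hg : g ≠ 0 := ne_zero_of_isRelPrime_of_eval_eq_zero hfg.symm (hT q hq).1
  set t := #T
  set n := f.totalDegree
  set m := g.totalDegree
  let V : ℕ → Submodule K (MvPolynomial (Fin 2) K) := restrictTotalDegree (Fin 2) K
  let P := (V (t + m)).map (LinearMap.mulLeft K f)
  let Q := (V (t + n)).map (LinearMap.mulLeft K g)
  have hP : finrank K P = finrank K (V (t + m)) :=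
    (Submodule.equivMapOfInjective _ (mul_right_injective₀ hf) _).finrank_eq.symm
  have hQ : finrank K Q = finrank K (V (t + n)) :=
    (Submodule.equivMapOfInjective _ (mul_right_injective₀ hg) _).finrank_eq.symm
  have hPQ : finrank K ↥(P ⊓ Q) ≤ finrank K (V t) :=
    (Submodule.finrank_mono (map_mulLeft_inf_map_mulLeft_le hfg hg t _)).trans
      (Submodule.finrank_map_le _ _)
  have hvanish : P ⊔ Q ≤ V (n + (t + m)) ⊓ LinearMap.ker (evalOn T) := by
    refine sup_le (le_inf (map_mulLeft_restrictTotalDegree_le f _) ?_) (le_inf ?_ ?_)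
    · exact LinearMap.map_le_range.trans (range_mulLeft_le_ker_evalOn fun x hx => (hT x hx).1)
    · exact (map_mulLeft_restrictTotalDegree_le g _).trans_eq (by congr 1; omega)
    · exact LinearMap.map_le_range.trans (range_mulLeft_le_ker_evalOn fun x hx => (hT x hx).2)
  have hcodim := Submodule.finrank_map_add_finrank_inf_ker (evalOn T) (V (n + (t + m)))
  rw [map_evalOn_restrictTotalDegree (by omega), finrank_top, finrank_fintype_fun_eq_card,
    Fintype.card_coe] at hcodim
  have hsup := Submodule.finrank_sup_add_finrank_inf_eq P Q
  have hmono := Submodule.finrank_mono hvanish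
  have h₁ := finrank_restrictTotalDegree_fin_two (K := K) (t + m)
  have h₂ := finrank_restrictTotalDegree_fin_two (K := K) (t + n)
  have h₃ := finrank_restrictTotalDegree_fin_two (K := K) t
  have h₄ := finrank_restrictTotalDegree_fin_two (K := K) (n + (t + m))
  nlinarith

end MvPolynomial

/-- Bezout's theorem in the plane: two relatively prime real
polynomial curves `f = 0` and `g = 0` in the plane, of total degrees `n` and
`m`, meet in at most `m * n` points. -/
theorem stmt_14 (f g : MvPolynomial (Fin 2) ℝ) (n m : ℕ)
    (hf : f.totalDegree = n) (hg : g.totalDegree = m)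
    (hcop : IsRelPrime f g) :
    {p : ℝ × ℝ | MvPolynomial.eval ![p.1, p.2] f = 0 ∧
        MvPolynomial.eval ![p.1, p.2] g = 0}.Finite ∧
      {p : ℝ × ℝ | MvPolynomial.eval ![p.1, p.2] f = 0 ∧
        MvPolynomial.eval ![p.1, p.2] g = 0}.ncard ≤ m * n := by
  subst hf hg
  refine Set.finite_and_ncard_le_of_forall_finset_card_le fun T hT => ?_
  rw [← card_map (finTwoArrowEquiv ℝ).symm.toEmbedding, mul_comm]
  refine card_le_totalDegree_mul_of_isRelPrime hcop fun q hq => ?_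
  obtain ⟨p, hp, rfl⟩ := mem_map.1 hq
  exact hT hp
end
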